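/- Let S be a set of four pairwise disjoint (trivially intersecting) 2-dimensional subspaces S_1,...,S_4 of E = F_2^4. Then the orthogonal complements S_1^⊥,...,S_4^⊥ are pairwise trivially intersecting 2-dimensional subspaces, and the 3 nonzero vectors of E not covered by them form, together with 0, a 2-dimensional subspace S_5^⊥; in particular S_1^⊥,...,S_5^⊥ form a 2-spread of F_2^4. -/

import Mathlib

/-!
Orthogonality for the dot product turns `U ⊔ W = ⊤` into `U^⊥ ⊓ W^⊥ = ⊥`, and `U^⊥` has the
complementary dimension, so the `(S i)^⊥` are four pairwise complementary planes. They cover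
`1 + 4 · 3 = 13` of the `16` vectors, leaving three nonzero ones. Over `𝔽₂` the vectors of a space
of dimension at least two sum to zero, so the three leftover vectors sum to zero too: they are
`x, y, x + y`, and together with `0` they form a plane.
-/

open Matrix

variable {F : Type*} [Field F]

/-- Column space of a matrix: the span of its columns. -/
def colSpace {n m : ℕ} (M : Matrix (Fin n) (Fin m) F) : Submodule F (Fin n → F) :=
  Submodule.span F (Set.range Mᵀ)

lemma colSpace_le_iff {n m : ℕ} (M : Matrix (Fin n) (Fin m) F) (U : Submodule F (Fin n → F)) :
    colSpace M ≤ U ↔ ∀ j, Mᵀ j ∈ U := by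
  rw [colSpace, Submodule.span_le]
  exact ⟨fun h j => h ⟨j, rfl⟩, fun h _ ⟨j, hj⟩ => hj ▸ h j⟩

/-- `C(U)`: the codewords of `C` whose column space is contained in `U`. -/
def codeCU {n m : ℕ} (C : Submodule F (Matrix (Fin n) (Fin m) F))
    (U : Submodule F (Fin n → F)) : Submodule F (Matrix (Fin n) (Fin m) F) where
  carrier := {M | M ∈ C ∧ colSpace M ≤ U}
  add_mem' := by
    rintro a b ⟨haC, ha⟩ ⟨hbC, hb⟩
    refine ⟨C.add_mem haC hbC, (colSpace_le_iff _ _).2 fun j => ?_⟩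
    have h := U.add_mem ((colSpace_le_iff a U).1 ha j) ((colSpace_le_iff b U).1 hb j)
    rw [Matrix.transpose_add]; exact h
  zero_mem' := by
    exact ⟨C.zero_mem, (colSpace_le_iff _ _).2 fun j => U.zero_mem⟩
  smul_mem' := by
    rintro c a ⟨haC, ha⟩
    refine ⟨C.smul_mem c haC, (colSpace_le_iff _ _).2 fun j => ?_⟩
    have h := U.smul_mem c ((colSpace_le_iff a U).1 ha j)
    rw [Matrix.transpose_smul]; exact h

/-- Orthogonal complement with respect to the standard (dot-product) bilinear form. -/
def perp {n : ℕ} (U : Submodule F (Fin n → F)) : Submodule F (Fin n → F) where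
  carrier := {v | ∀ u ∈ U, v ⬝ᵥ u = 0}
  add_mem' := by
    intro a b ha hb u hu
    rw [add_dotProduct, ha u hu, hb u hu, add_zero]
  zero_mem' := by
    intro u hu
    rw [zero_dotProduct]
  smul_mem' := by
    intro c a ha u hu
    rw [smul_dotProduct, ha u hu, smul_zero]

/-- The minimum rank distance of a matrix code. -/
noncomputable def minRankDist {n m : ℕ} (C : Submodule F (Matrix (Fin n) (Fin m) F)) : ℕ :=
  sInf {r : ℕ | ∃ M ∈ C, M ≠ 0 ∧ M.rank = r}

/-- The rank function of the q-polymatroid associated to a matrix rank-metric code. -/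
noncomputable def rhoCode {n m : ℕ} (C : Submodule F (Matrix (Fin n) (Fin m) F))
    (U : Submodule F (Fin n → F)) : ℚ :=
  ((Module.finrank F C : ℚ) - (Module.finrank F (codeCU C (perp U)) : ℚ)) / (m : ℚ)

open Module

section Perp

variable {n : ℕ}

lemma perp_eq_comap_dualAnnihilator (U : Submodule F (Fin n → F)) :
    perp U = U.dualAnnihilator.comap (dotProductEquiv F (Fin n)).toLinearMap := by
  ext v
  simp [perp, Submodule.mem_dualAnnihilator]

lemma finrank_perp_add_finrank (U : Submodule F (Fin n → F)) :
    finrank F (perp U) + finrank F U = n := by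
  rw [perp_eq_comap_dualAnnihilator, Submodule.comap_equiv_eq_map_symm,
    LinearEquiv.finrank_map_eq, add_comm, Subspace.finrank_add_finrank_dualAnnihilator_eq,
    finrank_fin_fun]

lemma perp_sup (U W : Submodule F (Fin n → F)) : perp (U ⊔ W) = perp U ⊓ perp W := by
  simp only [perp_eq_comap_dualAnnihilator, Submodule.dualAnnihilator_sup_eq, Submodule.comap_inf]

lemma perp_top : perp (⊤ : Submodule F (Fin n → F)) = ⊥ := by
  rw [perp_eq_comap_dualAnnihilator, Submodule.dualAnnihilator_top, Submodule.comap_bot,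
    LinearEquiv.ker]

lemma perp_inf_perp_eq_bot {U W : Submodule F (Fin n → F)} (h : IsCompl U W) :
    perp U ⊓ perp W = ⊥ := by
  rw [← perp_sup, h.sup_eq_top, perp_top]

end Perp

section ZModTwo

variable {V : Type*} [AddCommGroup V] [Module (ZMod 2) V]

lemma add_self_eq_zero_of_zmod_two (x : V) : x + x = 0 := by
  rw [← two_smul (ZMod 2) x, show (2 : ZMod 2) = 0 from rfl, zero_smul]

lemma zmod_two_eq_zero_or_one : ∀ a : ZMod 2, a = 0 ∨ a = 1 := by decide

lemma sum_apply_eq_zero_of_two_le_card {ι : Type*} [Fintype ι] [DecidableEq ι]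
    (hι : 2 ≤ Fintype.card ι) (i : ι) : ∑ c : ι → ZMod 2, c i = 0 := by
  obtain ⟨j, hji⟩ := Fintype.exists_ne_of_one_lt_card hι i
  -- flipping coordinate `j` pairs up the vectors with equal `i`-th coordinate
  refine Finset.sum_involution (fun c _ => c + Pi.single j 1) (fun c _ => ?_) (fun c _ _ => ?_)
    (fun c _ => Finset.mem_univ _) (fun c _ => ?_)
  · simp [hji.symm, add_self_eq_zero_of_zmod_two]
  · simp [Pi.single_eq_zero_iff]
  · rw [add_assoc, add_self_eq_zero_of_zmod_two, add_zero]

lemma sum_univ_eq_zero_of_two_le_finrank [Fintype V] (h : 2 ≤ finrank (ZMod 2) V) :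
    ∑ v : V, v = 0 := by
  let b := Module.finBasis (ZMod 2) V
  calc ∑ v : V, v = ∑ c : Fin (finrank (ZMod 2) V) → ZMod 2, b.equivFun.symm c :=
        (Fintype.sum_equiv b.equivFun.symm (fun c => b.equivFun.symm c) id fun _ => rfl).symm
    _ = ∑ i, (∑ c : Fin (finrank (ZMod 2) V) → ZMod 2, c i) • b i := by
        simp only [Basis.equivFun_symm_apply, Finset.sum_smul]
        exact Finset.sum_comm
    _ = 0 := by
        simp [sum_apply_eq_zero_of_two_le_card (ι := Fin (finrank (ZMod 2) V)) (by simpa using h)]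

lemma mem_span_pair_iff_of_zmod_two {x y v : V} :
    v ∈ Submodule.span (ZMod 2) {x, y} ↔ v = 0 ∨ v = x ∨ v = y ∨ v = x + y := by
  rw [Submodule.mem_span_pair]
  constructor
  · rintro ⟨a, b, rfl⟩
    rcases zmod_two_eq_zero_or_one a with rfl | rfl <;>
      rcases zmod_two_eq_zero_or_one b with rfl | rfl <;> simp
  · rintro (rfl | rfl | rfl | rfl)
    exacts [⟨0, 0, by simp⟩, ⟨1, 0, by simp⟩, ⟨0, 1, by simp⟩, ⟨1, 1, by simp⟩]

lemma finrank_span_pair_of_zmod_two {x y : V} (hx : x ≠ 0) (hy : y ≠ 0) (hxy : x ≠ y) :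
    finrank (ZMod 2) (Submodule.span (ZMod 2) {x, y}) = 2 := by
  have hli : LinearIndependent (ZMod 2) ![x, y] := by
    rw [LinearIndependent.pair_iff' hx]
    intro a
    rcases zmod_two_eq_zero_or_one a with rfl | rfl <;> simp [hxy, hy.symm]
  have h := finrank_span_eq_card hli
  rwa [Matrix.range_cons_cons_empty, Fintype.card_fin] at h

lemma exists_finrank_eq_two_of_card_eq_three [DecidableEq V] {A : Finset V} (h0 : (0 : V) ∉ A)
    (hcard : A.card = 3) (hsum : ∑ v ∈ A, v = 0) :
    ∃ T : Submodule (ZMod 2) V, finrank (ZMod 2) T = 2 ∧ ∀ v, v ∈ T ↔ v = 0 ∨ v ∈ A := by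
  obtain ⟨x, y, z, hxy, hxz, hyz, rfl⟩ := Finset.card_eq_three.1 hcard
  rw [Finset.sum_insert (by simp [hxy, hxz]), Finset.sum_insert (by simp [hyz]),
    Finset.sum_singleton] at hsum
  have hz : z = x + y := calc
    z = (x + x) + (y + y) + z := by simp [add_self_eq_zero_of_zmod_two]
    _ = x + (y + z) + (x + y) := by abel
    _ = x + y := by rw [hsum, zero_add]
  subst hz
  simp only [Finset.mem_insert, Finset.mem_singleton, not_or] at h0
  refine ⟨Submodule.span (ZMod 2) {x, y},
    finrank_span_pair_of_zmod_two (Ne.symm h0.1) (Ne.symm h0.2.1) hxy, fun v => ?_⟩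
  simp [mem_span_pair_iff_of_zmod_two]

end ZModTwo

section PartialSpread

open Finset Function

variable {K V ι : Type*} [DivisionRing K] [AddCommGroup V] [Module K V] [Fintype V] [Fintype ι]

open scoped Classical in
noncomputable def nonzeroPoints (W : Submodule K V) : Finset V := {v | v ∈ W ∧ v ≠ 0}

open scoped Classical in
noncomputable def uncoveredPoints (P : ι → Submodule K V) : Finset V :=
  {v | v ≠ 0 ∧ ∀ i, v ∉ P i}

lemma mem_nonzeroPoints {W : Submodule K V} {v : V} : v ∈ nonzeroPoints W ↔ v ∈ W ∧ v ≠ 0 := by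
  simp [nonzeroPoints]

lemma mem_uncoveredPoints {P : ι → Submodule K V} {v : V} :
    v ∈ uncoveredPoints P ↔ v ≠ 0 ∧ ∀ i, v ∉ P i := by
  simp [uncoveredPoints]

open scoped Classical in
lemma nonzeroPoints_eq_erase (W : Submodule K V) :
    nonzeroPoints W = (W : Set V).toFinset.erase 0 := by
  ext v
  simp [mem_nonzeroPoints, and_comm]

lemma card_nonzeroPoints [Fintype K] (W : Submodule K V) :
    (nonzeroPoints W).card = Fintype.card K ^ finrank K W - 1 := by
  classical
  rw [nonzeroPoints_eq_erase, card_erase_of_mem (by simp), Set.toFinset_card]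
  congr 1
  convert Module.card_eq_pow_finrank (K := K) (V := W)
  exact SetLike.mem_coe

lemma sum_nonzeroPoints_of_zmod_two [Module (ZMod 2) V] (W : Submodule (ZMod 2) V)
    (hW : 2 ≤ finrank (ZMod 2) W) : ∑ v ∈ nonzeroPoints W, v = 0 := by
  classical
  rw [nonzeroPoints_eq_erase, sum_erase _ (f := fun v => v) rfl,
    Finset.sum_subtype _ fun v => Set.mem_toFinset]
  exact_mod_cast congrArg Subtype.val (sum_univ_eq_zero_of_two_le_finrank hW)

lemma sum_uncoveredPoints_add {M : Type*} [AddCommMonoid M] {P : ι → Submodule K V}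
    (hP : Pairwise (Disjoint on P)) (f : V → M) :
    ∑ v ∈ uncoveredPoints P, f v + (f 0 + ∑ i, ∑ v ∈ nonzeroPoints (P i), f v) = ∑ v, f v := by
  classical
  set C := univ.biUnion fun i => nonzeroPoints (P i)
  have hC : Set.PairwiseDisjoint ↑(univ : Finset ι) fun i => nonzeroPoints (P i) := by
    intro i _ j _ hij
    refine disjoint_left.2 fun v hvi hvj => ?_
    rw [mem_nonzeroPoints] at hvi hvj
    exact hvi.2 ((Submodule.disjoint_def.1 (hP hij)) v hvi.1 hvj.1)
  have h0 : (0 : V) ∉ C := by simp [C, mem_nonzeroPoints]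
  have hU : uncoveredPoints P = univ \ insert 0 C := by
    ext v
    simp only [C, mem_uncoveredPoints, mem_sdiff, mem_insert, mem_biUnion, mem_univ,
      mem_nonzeroPoints, true_and, not_or, not_exists, not_and]
    tauto
  rw [hU, ← sum_biUnion hC, ← sum_insert h0]
  exact sum_sdiff (subset_univ _)

end PartialSpread

/-- four pairwise trivially intersecting 2-spaces of `F_2^4` have pairwise
trivially intersecting 2-dimensional orthogonal complements, and the uncovered nonzero
vectors together with `0` form a fifth 2-space, completing a 2-spread of `F_2^4`. -/
theorem four_disjoint_planes_spread
    (S : Fin 4 → Submodule (ZMod 2) (Fin 4 → ZMod 2))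
    (hdim : ∀ i, Module.finrank (ZMod 2) (S i) = 2)
    (hdisj : ∀ i j, i ≠ j → S i ⊓ S j = ⊥) :
    (∀ i, Module.finrank (ZMod 2) (perp (S i)) = 2) ∧
    (∀ i j, i ≠ j → perp (S i) ⊓ perp (S j) = ⊥) ∧
    ∃ T : Submodule (ZMod 2) (Fin 4 → ZMod 2),
      Module.finrank (ZMod 2) T = 2 ∧
      (∀ v : Fin 4 → ZMod 2, v ∈ T ↔ (v = 0 ∨ ∀ i, v ∉ perp (S i))) ∧
      (∀ v : Fin 4 → ZMod 2, v ≠ 0 → (∃ i, v ∈ perp (S i)) ∨ v ∈ T) ∧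
      (∀ i, perp (S i) ⊓ T = ⊥) := by
  have hdim_perp (i : Fin 4) : finrank (ZMod 2) (perp (S i)) = 2 := by
    have h := finrank_perp_add_finrank (S i)
    rw [hdim] at h
    omega
  have hdisj_perp (i j : Fin 4) (hij : i ≠ j) : perp (S i) ⊓ perp (S j) = ⊥ :=
    perp_inf_perp_eq_bot <| (Submodule.isCompl_iff_disjoint _ _ (by simp [hdim])).2 <|
      disjoint_iff.2 (hdisj i j hij)
  have hP : Pairwise fun i j => Disjoint (perp (S i)) (perp (S j)) := fun i j hij =>
    disjoint_iff.2 (hdisj_perp i j hij)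
  have hcard : (uncoveredPoints fun i => perp (S i)).card = 3 := by
    have h := sum_uncoveredPoints_add hP fun _ => 1
    simp only [Finset.sum_const, smul_eq_mul, mul_one, card_nonzeroPoints, hdim_perp, ZMod.card,
      Finset.card_univ, Fintype.card_fun, Fintype.card_fin] at h
    omega
  have hsum : ∑ v ∈ uncoveredPoints fun i => perp (S i), v = 0 := by
    simpa [sum_nonzeroPoints_of_zmod_two _ (hdim_perp _).ge,
      sum_univ_eq_zero_of_two_le_finrank (V := Fin 4 → ZMod 2)] using
      sum_uncoveredPoints_add hP id
  obtain ⟨T, hT, hmemT⟩ := exists_finrank_eq_two_of_card_eq_three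
    (fun h => (mem_uncoveredPoints.1 h).1 rfl) hcard hsum
  have hmem (v) : v ∈ T ↔ v = 0 ∨ ∀ i, v ∉ perp (S i) := by
    rw [hmemT, mem_uncoveredPoints]; tauto
  refine ⟨hdim_perp, hdisj_perp, T, hT, hmem, fun v hv => ?_, fun i => ?_⟩
  · by_contra! h
    exact h.2 ((hmem v).2 (Or.inr h.1))
  · refine (Submodule.disjoint_def.2 fun v hvi hvT => ?_).eq_bot
    exact ((hmem v).1 hvT).resolve_right fun h => h i hvi
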